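/- arXiv:1602.08012 — 9 statements merged into one kernel-verified Lean document; each statement's English description precedes it below -/
import Mathlib

section
/- The upper approximation of (H₁H₂)/N is contained in the pointwise product of the upper approximations of H₁/N and H₂/N. -/
open Pointwise

def conjClass {G : Type*} [Group G] (N : Subgroup G) [N.Normal] (x : G) : Set (G ⧸ N) :=
  {q | ∃ a : G, q = ((a * x * a⁻¹ : G) : G ⧸ N)}

def lowerApprox {G : Type*} [Group G] (N : Subgroup G) [N.Normal] (S : Set (G ⧸ N)) :
    Set (G ⧸ N) :=
  {q | ∃ x : G, (x : G ⧸ N) = q ∧ conjClass N x ⊆ S}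

def upperApprox {G : Type*} [Group G] (N : Subgroup G) [N.Normal] (S : Set (G ⧸ N)) :
    Set (G ⧸ N) :=
  {q | ∃ x : G, (x : G ⧸ N) = q ∧ (conjClass N x ∩ S).Nonempty}

theorem stmt10 {G : Type*} [Group G] (N : Subgroup G) [N.Normal] (H₁ H₂ : Set G)
    (h₁ : H₁.Nonempty) (h₂ : H₂.Nonempty)
    (hN₁ : (N : Set G) ⊆ H₁) (hN₂ : (N : Set G) ⊆ H₂) :
    upperApprox N (QuotientGroup.mk '' (H₁ * H₂) : Set (G ⧸ N)) ⊆
      upperApprox N (QuotientGroup.mk '' H₁) * upperApprox N (QuotientGroup.mk '' H₂) := by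
  rintro q ⟨x, rfl, p, ⟨a, rfl⟩, g, hg, hp⟩
  obtain ⟨c, hcH, d, hdH, rfl⟩ := hg
  refine ⟨((a⁻¹ * c * a : G) : G ⧸ N), ⟨a⁻¹ * c * a, rfl,
      ((c : G) : G ⧸ N), ⟨a, by group⟩, ⟨c, hcH, rfl⟩⟩,
    ((a⁻¹ * d * a : G) : G ⧸ N), ⟨a⁻¹ * d * a, rfl,
      ((d : G) : G ⧸ N), ⟨a, by group⟩, ⟨d, hdH, rfl⟩⟩, ?_⟩
  have hcd : ((a * x * a⁻¹ : G) : G ⧸ N) = ((c * d : G) : G ⧸ N) := hp.symm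
  rw [QuotientGroup.eq] at hcd
  show ((a⁻¹ * c * a * (a⁻¹ * d * a) : G) : G ⧸ N) = ((x : G) : G ⧸ N)
  rw [QuotientGroup.eq]
  have := (‹N.Normal›).conj_mem _ hcd a⁻¹
  have h2 := N.inv_mem this
  convert h2 using 1
  group
end

section
/- The pointwise product of the lower approximations of H₁/N and H₂/N is contained in the lower approximation of (H₁H₂)/N. -/
open Pointwise

theorem stmt11 {G : Type*} [Group G] (N : Subgroup G) [N.Normal] (H₁ H₂ : Set G)
    (h₁ : H₁.Nonempty) (h₂ : H₂.Nonempty)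
    (hN₁ : (N : Set G) ⊆ H₁) (hN₂ : (N : Set G) ⊆ H₂) :
    lowerApprox N (QuotientGroup.mk '' H₁ : Set (G ⧸ N)) *
        lowerApprox N (QuotientGroup.mk '' H₂) ⊆
      lowerApprox N (QuotientGroup.mk '' (H₁ * H₂)) := by
  rintro q ⟨q1, ⟨x, rfl, hx⟩, q2, ⟨y, rfl, hy⟩, rfl⟩
  refine ⟨x * y, by simp [QuotientGroup.mk_mul], ?_⟩
  rintro q ⟨a, rfl⟩
  obtain ⟨b₁, hb₁, heq₁⟩ := hx ⟨a, rfl⟩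
  obtain ⟨b₂, hb₂, heq₂⟩ := hy ⟨a, rfl⟩
  refine ⟨b₁ * b₂, Set.mul_mem_mul hb₁ hb₂, ?_⟩
  have : a * (x * y) * a⁻¹ = (a * x * a⁻¹) * (a * y * a⁻¹) := by group
  rw [this, QuotientGroup.mk_mul, QuotientGroup.mk_mul, ← heq₁, ← heq₂]
end

section
/- If N is a normal subgroup of G and H is a subgroup of G containing N, then the lower approximation of H/N is a normal subgroup of G/N. -/
theorem stmt12 {G : Type*} [Group G] (N H : Subgroup G) [N.Normal] (hNH : N ≤ H) :
    ∃ K : Subgroup (G ⧸ N),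
      (K : Set (G ⧸ N)) = lowerApprox N (QuotientGroup.mk '' (H : Set G)) ∧ K.Normal := by
  have key : ∀ y : G, (y : G ⧸ N) ∈ QuotientGroup.mk '' (H : Set G) ↔ y ∈ H := by
    intro y
    constructor
    · rintro ⟨h, hh, heq⟩
      have : h⁻¹ * y ∈ N := QuotientGroup.eq.mp heq
      have := hNH this
      have : h * (h⁻¹ * y) ∈ H := H.mul_mem hh this
      simpa using this
    · intro hy; exact ⟨y, hy, rfl⟩
  refine ⟨(H.normalCore).map (QuotientGroup.mk' N), ?_, Subgroup.Normal.map H.normalCore_normal _ (QuotientGroup.mk'_surjective N)⟩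
  ext q
  simp only [Subgroup.coe_map, Set.mem_image, SetLike.mem_coe]
  constructor
  · rintro ⟨x, hx, rfl⟩
    refine ⟨x, rfl, ?_⟩
    rintro _ ⟨a, rfl⟩
    exact (key _).mpr (hx a)
  · rintro ⟨x, rfl, hsub⟩
    refine ⟨x, ?_, rfl⟩
    intro a
    exact (key _).mp (hsub ⟨a, rfl⟩)
end

section
/- Let N ⊆ M be normal subgroups of G and H a subset of G with M ⊆ H. If xN lies in the lower approximation of H/N in G/N, then xM lies in the lower approximation of H/M in G/M. -/
theorem stmt13 {G : Type*} [Group G] (N M : Subgroup G) [N.Normal] [M.Normal]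
    (hNM : N ≤ M) (H : Set G) (hMH : (M : Set G) ⊆ H) (x : G)
    (hx : (x : G ⧸ N) ∈ lowerApprox N (QuotientGroup.mk '' H)) :
    (x : G ⧸ M) ∈ lowerApprox M (QuotientGroup.mk '' H) := by
  obtain ⟨x', hx'eq, hsub⟩ := hx
  refine ⟨x, rfl, ?_⟩
  rintro q ⟨a, rfl⟩
  obtain ⟨h, hH, hhq⟩ := hsub (show ((a * x' * a⁻¹ : G) : G ⧸ N) ∈ conjClass N x' from ⟨a, rfl⟩)
  rw [QuotientGroup.eq] at hhq hx'eq
  refine ⟨h, hH, ?_⟩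
  rw [QuotientGroup.eq]
  have h1 : h⁻¹ * (a * x' * a⁻¹) ∈ M := hNM hhq
  have h2 : a * (x'⁻¹ * x) * a⁻¹ ∈ M := Subgroup.Normal.conj_mem ‹M.Normal› _ (hNM hx'eq) a
  have := M.mul_mem h1 h2
  convert this using 1
  group
end

section
/- Let N ⊆ M be normal subgroups of G and H a subset of G with M ⊆ H. If xN lies in the upper approximation of H/N in G/N, then xM lies in the upper approximation of H/M in G/M. -/
theorem stmt14 {G : Type*} [Group G] (N M : Subgroup G) [N.Normal] [M.Normal]
    (hNM : N ≤ M) (H : Set G) (hMH : (M : Set G) ⊆ H) (x : G)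
    (hx : (x : G ⧸ N) ∈ upperApprox N (QuotientGroup.mk '' H)) :
    (x : G ⧸ M) ∈ upperApprox M (QuotientGroup.mk '' H) := by
  obtain ⟨y, hyx, q, ⟨a, rfl⟩, h, hH, hq⟩ := hx
  have hxy : x⁻¹ * y ∈ M := hNM ((QuotientGroup.eq (s := N)).mp hyx.symm)
  have hyh : (a * y * a⁻¹)⁻¹ * h ∈ M := hNM ((QuotientGroup.eq (s := N)).mp hq.symm)
  refine ⟨x, rfl, ((h : G ⧸ M)), ⟨a, ?_⟩, ⟨h, hH, rfl⟩⟩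
  rw [QuotientGroup.eq]
  have : (a * x * a⁻¹)⁻¹ * h =
      (a * (x⁻¹ * y) * a⁻¹) * ((a * y * a⁻¹)⁻¹ * h) := by group
  have h2 : (a * x * a⁻¹)⁻¹ * h ∈ M := by
    rw [this]
    exact mul_mem (Subgroup.Normal.conj_mem ‹M.Normal› _ hxy a) hyh
  simpa using inv_mem h2
end

section
/- Let N and M be normal subgroups of G and H a subgroup of G containing both N and M. Then for any x ∈ G, xN lies in the lower approximation of H/N in G/N if and only if xM lies in the lower approximation of H/M in G/M. -/
lemma lowerApprox_iff_conj {G : Type*} [Group G] (N H : Subgroup G) [N.Normal]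
    (hNH : N ≤ H) (x : G) :
    (x : G ⧸ N) ∈ lowerApprox N (QuotientGroup.mk '' (H : Set G)) ↔
      ∀ a : G, a * x * a⁻¹ ∈ H := by
  constructor
  · rintro ⟨x', hx', hsub⟩ a
    have hmem : ((a * x' * a⁻¹ : G) : G ⧸ N) ∈ QuotientGroup.mk '' (H : Set G) :=
      hsub ⟨a, rfl⟩
    obtain ⟨h, hh, hheq⟩ := hmem
    have h1 : h⁻¹ * (a * x' * a⁻¹) ∈ N := QuotientGroup.eq.mp hheq
    have hx'H : a * x' * a⁻¹ ∈ H := by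
      have := mul_mem hh (hNH h1)
      simpa using this
    -- x' = x * n for some n ∈ N
    have hn : x⁻¹ * x' ∈ N := QuotientGroup.eq.mp hx'.symm
    have hconj : a * (x⁻¹ * x') * a⁻¹ ∈ N := Subgroup.Normal.conj_mem ‹N.Normal› _ hn a
    have key : a * x * a⁻¹ = (a * x' * a⁻¹) * (a * (x⁻¹ * x') * a⁻¹)⁻¹ := by
      group
    rw [key]
    exact mul_mem hx'H (inv_mem (hNH hconj))
  · intro hall
    exact ⟨x, rfl, by rintro q ⟨a, rfl⟩; exact ⟨a * x * a⁻¹, hall a, rfl⟩⟩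

theorem stmt15 {G : Type*} [Group G] (N M H : Subgroup G) [N.Normal] [M.Normal]
    (hNH : N ≤ H) (hMH : M ≤ H) (x : G) :
    (x : G ⧸ N) ∈ lowerApprox N (QuotientGroup.mk '' (H : Set G)) ↔
      (x : G ⧸ M) ∈ lowerApprox M (QuotientGroup.mk '' (H : Set G)) := by
  rw [lowerApprox_iff_conj N H hNH, lowerApprox_iff_conj M H hMH]
end

section
/- Let N ⊆ M be normal subgroups of G and H a subgroup containing M. Write the lower approximation of H/N in G/N as K/N and the lower approximation of H/M in G/M as T/M, for normal subgroups K, T of G with N ⊆ K ⊆ H and M ⊆ T ⊆ H. Then the map K/N → T/M sending xN to xM is a well-defined surjective group homomorphism with kernel M/N. -/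
lemma mem_image_iff_aux {G : Type*} [Group G] (N H : Subgroup G) [N.Normal]
    (hNH : N ≤ H) (x : G) :
    ((x : G ⧸ N) ∈ QuotientGroup.mk '' (H : Set G)) ↔ x ∈ H := by
  constructor
  · rintro ⟨h, hh, he⟩
    have h1 : h⁻¹ * x ∈ N := QuotientGroup.eq.mp he
    have h2 : x = h * (h⁻¹ * x) := by group
    rw [h2]
    exact H.mul_mem hh (hNH h1)
  · intro hx
    exact ⟨x, hx, rfl⟩

theorem stmt17 {G : Type*} [Group G] (N M : Subgroup G) [N.Normal] [M.Normal]
    (hNM : N ≤ M) (H : Subgroup G) (hMH : M ≤ H)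
    (K T : Subgroup G) [K.Normal] [T.Normal]
    (hNK : N ≤ K) (hKH : K ≤ H) (hMT : M ≤ T) (hTH : T ≤ H)
    (hK : (QuotientGroup.mk '' (K : Set G) : Set (G ⧸ N)) =
      lowerApprox N (QuotientGroup.mk '' (H : Set G)))
    (hT : (QuotientGroup.mk '' (T : Set G) : Set (G ⧸ M)) =
      lowerApprox M (QuotientGroup.mk '' (H : Set G))) :
    ∃ φ : (K.map (QuotientGroup.mk' N)) →* (T.map (QuotientGroup.mk' M)),
      (∀ (x : G) (hx : (x : G ⧸ N) ∈ K.map (QuotientGroup.mk' N)),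
        (φ ⟨(x : G ⧸ N), hx⟩ : G ⧸ M) = (x : G ⧸ M)) ∧
      Function.Surjective φ ∧
      (∀ y : K.map (QuotientGroup.mk' N),
        y ∈ φ.ker ↔ ∃ m ∈ M, (y : G ⧸ N) = (m : G ⧸ N)) := by
  have hNH : N ≤ H := hNM.trans hMH
  have memK : ∀ x : G, ((x : G ⧸ N) ∈ K.map (QuotientGroup.mk' N)) ↔ x ∈ K := by
    intro x
    constructor
    · rintro ⟨k, hk, he⟩
      have h1 : k⁻¹ * x ∈ N := QuotientGroup.eq.mp he
      have h2 : x = k * (k⁻¹ * x) := by group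
      rw [h2]; exact K.mul_mem hk (hNK h1)
    · intro hx; exact ⟨x, hx, rfl⟩
  have key : ∀ x : G, x ∈ K → ((x : G ⧸ M) ∈ T.map (QuotientGroup.mk' M)) := by
    intro x hx
    have h1 : (x : G ⧸ N) ∈ lowerApprox N (QuotientGroup.mk '' (H : Set G)) := by
      rw [← hK]; exact ⟨x, hx, rfl⟩
    obtain ⟨x', hx'e, hx'c⟩ := h1
    have hxM : (x' : G ⧸ M) = (x : G ⧸ M) := by
      rw [QuotientGroup.eq] at hx'e ⊢
      exact hNM hx'e
    have h2 : (x : G ⧸ M) ∈ lowerApprox M (QuotientGroup.mk '' (H : Set G)) := by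
      refine ⟨x', hxM, ?_⟩
      rintro q ⟨a, rfl⟩
      have h3 : ((a * x' * a⁻¹ : G) : G ⧸ N) ∈ QuotientGroup.mk '' (H : Set G) :=
        hx'c ⟨a, rfl⟩
      have hH : a * x' * a⁻¹ ∈ H := (mem_image_iff_aux N H hNH _).mp h3
      exact ⟨a * x' * a⁻¹, hH, rfl⟩
    rw [← hT] at h2
    obtain ⟨t, ht, hte⟩ := h2
    exact ⟨t, ht, hte⟩
  let f : (K.map (QuotientGroup.mk' N)) →* (G ⧸ M) :=
    (QuotientGroup.map N M (MonoidHom.id G) hNM).comp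
      (K.map (QuotientGroup.mk' N)).subtype
  have hf : ∀ y : (K.map (QuotientGroup.mk' N)), f y ∈ T.map (QuotientGroup.mk' M) := by
    rintro ⟨y, k, hk, rfl⟩
    exact key k hk
  refine ⟨f.codRestrict _ hf, ?_, ?_, ?_⟩
  · intro x hx
    rfl
  · rintro ⟨q, t, ht, rfl⟩
    have hK' : (t : G ⧸ N) ∈ K.map (QuotientGroup.mk' N) := by
      rw [memK]
      have h4 : (t : G ⧸ N) ∈ lowerApprox N (QuotientGroup.mk '' (H : Set G)) := by
        refine ⟨t, rfl, ?_⟩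
        rintro q ⟨a, rfl⟩
        have h5 : a * t * a⁻¹ ∈ T := Subgroup.Normal.conj_mem ‹T.Normal› t ht a
        exact ⟨a * t * a⁻¹, hTH h5, rfl⟩
      rw [← hK] at h4
      exact (memK t).mp h4
    refine ⟨⟨(t : G ⧸ N), hK'⟩, ?_⟩
    apply Subtype.ext
    rfl
  · rintro ⟨y, hy⟩
    obtain ⟨k, hk, rfl⟩ := hy
    constructor
    · intro h
      have h1 : (k : G ⧸ M) = 1 := by
        have h2 := congrArg (Subtype.val) h
        exact h2
      rw [QuotientGroup.eq_one_iff] at h1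
      exact ⟨k, h1, rfl⟩
    · rintro ⟨m, hm, he⟩
      have hkM : k ∈ M := by
        have h1 : m⁻¹ * k ∈ N := QuotientGroup.eq.mp he.symm
        have h2 : k = m * (m⁻¹ * k) := by group
        rw [h2]; exact M.mul_mem hm (hNM h1)
      apply Subtype.ext
      show ((QuotientGroup.mk k : G ⧸ M)) = 1
      rwa [QuotientGroup.eq_one_iff]
end

section
/- Let N ⊆ M be normal subgroups of G and H a subgroup containing M, with K/N and T/M the lower approximations of H/N and H/M respectively (K, T normal subgroups of G). Then (G/N)/(K/N) is isomorphic to (G/M)/(T/M); in particular G/K ≅ G/T. -/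
lemma lowerApprox_mem_iff {G : Type*} [Group G] (N : Subgroup G) [N.Normal] (H K : Subgroup G)
    (hNH : N ≤ H) (hNK : N ≤ K)
    (hK : (QuotientGroup.mk '' (K : Set G) : Set (G ⧸ N)) =
      lowerApprox N (QuotientGroup.mk '' (H : Set G))) (x : G) :
    x ∈ K ↔ ∀ a : G, a * x * a⁻¹ ∈ H := by
  have himg : ∀ z : G, (z : G ⧸ N) ∈ (QuotientGroup.mk '' (H : Set G)) ↔ z ∈ H := by
    intro z
    constructor
    · rintro ⟨h, hh, heq⟩
      have : h⁻¹ * z ∈ N := (QuotientGroup.eq).mp heq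
      have := mul_mem hh (hNH this)
      simpa using this
    · intro hz; exact ⟨z, hz, rfl⟩
  constructor
  · intro hx a
    have hmem : (x : G ⧸ N) ∈ lowerApprox N (QuotientGroup.mk '' (H : Set G)) := by
      rw [← hK]; exact ⟨x, hx, rfl⟩
    obtain ⟨y, hy, hsub⟩ := hmem
    have hn : y⁻¹ * x ∈ N := (QuotientGroup.eq).mp hy
    have hya : a * y * a⁻¹ ∈ H := (himg _).mp (hsub ⟨a, rfl⟩)
    have hna : a * (y⁻¹ * x) * a⁻¹ ∈ H :=
      hNH (Subgroup.Normal.conj_mem ‹N.Normal› _ hn a)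
    have := mul_mem hya hna
    have hxy : (a * y * a⁻¹) * (a * (y⁻¹ * x) * a⁻¹) = a * x * a⁻¹ := by group
    rwa [hxy] at this
  · intro hx
    have hmem : (x : G ⧸ N) ∈ lowerApprox N (QuotientGroup.mk '' (H : Set G)) := by
      refine ⟨x, rfl, ?_⟩
      rintro q ⟨a, rfl⟩
      exact (himg _).mpr (hx a)
    rw [← hK] at hmem
    obtain ⟨k, hk, hkeq⟩ := hmem
    have : k⁻¹ * x ∈ N := (QuotientGroup.eq).mp hkeq
    have := mul_mem hk (hNK this)
    simpa using this

theorem stmt18 {G : Type*} [Group G] (N M : Subgroup G) [N.Normal] [M.Normal]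
    (hNM : N ≤ M) (H : Subgroup G) (hMH : M ≤ H)
    (K T : Subgroup G) [K.Normal] [T.Normal]
    (hNK : N ≤ K) (hKH : K ≤ H) (hMT : M ≤ T) (hTH : T ≤ H)
    [(K.map (QuotientGroup.mk' N)).Normal] [(T.map (QuotientGroup.mk' M)).Normal]
    (hK : (QuotientGroup.mk '' (K : Set G) : Set (G ⧸ N)) =
      lowerApprox N (QuotientGroup.mk '' (H : Set G)))
    (hT : (QuotientGroup.mk '' (T : Set G) : Set (G ⧸ M)) =
      lowerApprox M (QuotientGroup.mk '' (H : Set G))) :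
    Nonempty (((G ⧸ N) ⧸ K.map (QuotientGroup.mk' N)) ≃*
        ((G ⧸ M) ⧸ T.map (QuotientGroup.mk' M))) ∧
    Nonempty ((G ⧸ K) ≃* (G ⧸ T)) := by
  have hKT : K = T := by
    ext x
    rw [lowerApprox_mem_iff N H K (hNM.trans hMH) hNK hK x,
      lowerApprox_mem_iff M H T hMH hMT hT x]
  have e1 : ((G ⧸ N) ⧸ K.map (QuotientGroup.mk' N)) ≃* G ⧸ K :=
    QuotientGroup.quotientQuotientEquivQuotient N K hNK
  have e2 : ((G ⧸ M) ⧸ T.map (QuotientGroup.mk' M)) ≃* G ⧸ T :=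
    QuotientGroup.quotientQuotientEquivQuotient M T hMT
  have e3 : (G ⧸ K) ≃* G ⧸ T := QuotientGroup.quotientMulEquivOfEq hKT
  exact ⟨⟨e1.trans (e3.trans e2.symm)⟩, ⟨e3⟩⟩
end

section
/- Let N and M be normal subgroups of G contained in a subgroup H. Then the map sending x(N∩M) to x(NM) gives a surjective group homomorphism from the lower approximation of H/(N∩M) in G/(N∩M) onto the lower approximation of H/(NM) in G/(NM), with kernel NM/(N∩M). -/
theorem stmt19 {G : Type*} [Group G] (N M : Subgroup G) [N.Normal] [M.Normal]
    (H : Subgroup G) (hNH : N ≤ H) (hMH : M ≤ H)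
    (L₁ : Subgroup (G ⧸ (N ⊓ M))) (L₂ : Subgroup (G ⧸ (N ⊔ M)))
    (hL₁ : (L₁ : Set (G ⧸ (N ⊓ M))) =
      lowerApprox (N ⊓ M) (QuotientGroup.mk '' (H : Set G)))
    (hL₂ : (L₂ : Set (G ⧸ (N ⊔ M))) =
      lowerApprox (N ⊔ M) (QuotientGroup.mk '' (H : Set G))) :
    ∃ φ : L₁ →* L₂,
      (∀ (x : G) (hx : (x : G ⧸ (N ⊓ M)) ∈ L₁),
        (φ ⟨(x : G ⧸ (N ⊓ M)), hx⟩ : G ⧸ (N ⊔ M)) = (x : G ⧸ (N ⊔ M))) ∧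
      Function.Surjective φ ∧
      (∀ y : L₁, y ∈ φ.ker ↔ ∃ m ∈ (N ⊔ M : Subgroup G), (y : G ⧸ (N ⊓ M)) = (m : G ⧸ (N ⊓ M))) := by
  have hle : (N ⊓ M : Subgroup G) ≤ N ⊔ M := le_trans inf_le_left le_sup_left
  have hle' : (N ⊓ M : Subgroup G) ≤ (N ⊔ M).comap (MonoidHom.id G) := hle
  set f : G ⧸ (N ⊓ M) →* G ⧸ (N ⊔ M) :=
    QuotientGroup.map (N ⊓ M) (N ⊔ M) (MonoidHom.id G) hle' with hf
  have hfmk : ∀ x : G, f (x : G ⧸ (N ⊓ M)) = (x : G ⧸ (N ⊔ M)) := fun x => rfl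
  have hsupH : (N ⊔ M : Subgroup G) ≤ H := sup_le hNH hMH
  -- f maps L₁ into L₂
  have hmaps : ∀ y : L₁, f (y : G ⧸ (N ⊓ M)) ∈ L₂ := by
    rintro ⟨y, hy⟩
    have hy' : y ∈ lowerApprox (N ⊓ M) (QuotientGroup.mk '' (H : Set G)) := by
      rw [← hL₁]; exact hy
    obtain ⟨x, hx, hsub⟩ := hy'
    have : (f y : G ⧸ (N ⊔ M)) ∈ lowerApprox (N ⊔ M) (QuotientGroup.mk '' (H : Set G)) := by
      refine ⟨x, by rw [← hx]; rfl, ?_⟩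
      rintro q ⟨a, rfl⟩
      have h1 : ((a * x * a⁻¹ : G) : G ⧸ (N ⊓ M)) ∈ QuotientGroup.mk '' (H : Set G) :=
        hsub ⟨a, rfl⟩
      obtain ⟨h, hh, heq⟩ := h1
      refine ⟨h, hh, ?_⟩
      have : h⁻¹ * (a * x * a⁻¹) ∈ (N ⊓ M : Subgroup G) := by
        rwa [QuotientGroup.eq] at heq
      have : h⁻¹ * (a * x * a⁻¹) ∈ (N ⊔ M : Subgroup G) := hle this
      rw [QuotientGroup.eq]
      exact this
    have := hL₂ ▸ this
    exact this
  refine ⟨(f.comp L₁.subtype).codRestrict L₂ hmaps, ?_, ?_, ?_⟩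
  · intro x hx; rfl
  · -- surjective
    rintro ⟨q, hq⟩
    have hq' : q ∈ lowerApprox (N ⊔ M) (QuotientGroup.mk '' (H : Set G)) := by
      rw [← hL₂]; exact hq
    obtain ⟨x, hx, hsub⟩ := hq'
    have hxL₁ : (x : G ⧸ (N ⊓ M)) ∈ L₁ := by
      have : (x : G ⧸ (N ⊓ M)) ∈ lowerApprox (N ⊓ M) (QuotientGroup.mk '' (H : Set G)) := by
        refine ⟨x, rfl, ?_⟩
        rintro p ⟨a, rfl⟩
        -- show a*x*a⁻¹ ∈ H
        have h1 : ((a * x * a⁻¹ : G) : G ⧸ (N ⊔ M)) ∈ QuotientGroup.mk '' (H : Set G) :=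
          hsub ⟨a, rfl⟩
        obtain ⟨h, hh, heq⟩ := h1
        have hm : h⁻¹ * (a * x * a⁻¹) ∈ (N ⊔ M : Subgroup G) := by
          rwa [QuotientGroup.eq] at heq
        have hmem : a * x * a⁻¹ ∈ H := by
          have := H.mul_mem hh (hsupH hm)
          simpa using this
        exact ⟨a * x * a⁻¹, hmem, rfl⟩
      rw [← SetLike.mem_coe, hL₁]; exact this
    refine ⟨⟨(x : G ⧸ (N ⊓ M)), hxL₁⟩, ?_⟩
    apply Subtype.ext
    show f (x : G ⧸ (N ⊓ M)) = q
    rw [hfmk, hx]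
  · -- kernel
    rintro ⟨y, hy⟩
    constructor
    · intro hk
      have hk' : f y = 1 := congrArg Subtype.val hk
      obtain ⟨x, rfl⟩ := QuotientGroup.mk_surjective y
      rw [hfmk] at hk'
      have hx : x ∈ (N ⊔ M : Subgroup G) := by
        rwa [← QuotientGroup.eq_one_iff]
      exact ⟨x, hx, rfl⟩
    · rintro ⟨m, hm, heq⟩
      apply Subtype.ext
      show f y = 1
      simp only at heq
      rw [heq, hfmk, QuotientGroup.eq_one_iff]
      exact hm
end
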